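/- Let Δ be a root system, ξ a nonzero dominant coweight with r_ξ = #{α ∈ Δ⁺ : ⟨α, ξ⟩ > 0}, and let a_ξ and b_ξ be, respectively, the minimal and maximal value of ⟨α, ξ⟩ over roots α with ⟨α, ξ⟩ > 0. For w in the Weyl group with inversion set Φ_{w⁻¹} ⊆ {α ∈ Δ⁺ : ⟨α,ξ⟩ > 0} and l = #Φ_{w⁻¹}, one has a_ξ(r_ξ − l) − b_ξ l ≤ 2⟨wρ, ξ⟩ ≤ b_ξ(r_ξ − l) − a_ξ l. Consequently, if l < a_ξ r_ξ/(a_ξ + b_ξ) then ⟨wρ, ξ⟩ > 0, and if l ≥ b_ξ r_ξ/(a_ξ + b_ξ) then ⟨wρ, ξ⟩ ≤ 0. -/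
import Mathlib


open scoped Classical

/-- A reduced crystallographic root system in a real vector space `V`, together with a
choice of positive roots, simple roots, its Weyl group `W` (acting linearly on `V` and
generated by the reflections in the simple roots), the length function (word length with
respect to the simple reflections) and the Bruhat order (subword characterization). -/
structure RootSystemData (V : Type*) [AddCommGroup V] [Module ℝ V]
    (W : Type*) [Group W] where
  /-- The linear action of the Weyl group on the weight space. -/
  act : W →* (V ≃ₗ[ℝ] V)
  act_faithful : Function.Injective act
  /-- The set of roots. -/
  roots : Set V
  /-- The set of positive roots. -/
  pos : Set V
  /-- The set of simple roots. -/
  simple : Set V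
  /-- The coroot pairing: `coroot α β = ⟨β, α∨⟩`. -/
  coroot : V → Module.Dual ℝ V
  /-- The reflection in a root. -/
  refl : V → W
  /-- The length function. -/
  len : W → ℕ
  roots_finite : roots.Finite
  zero_not_mem : (0 : V) ∉ roots
  pos_subset : pos ⊆ roots
  roots_eq : roots = pos ∪ (-pos)
  pos_disjoint : Disjoint pos (-pos)
  reduced : ∀ α ∈ roots, ∀ c : ℝ, c • α ∈ roots → c = 1 ∨ c = -1
  roots_invariant : ∀ (w : W), ∀ α ∈ roots, act w α ∈ roots
  coroot_self : ∀ α ∈ roots, coroot α α = 2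
  coroot_int : ∀ α ∈ roots, ∀ β ∈ roots, ∃ n : ℤ, coroot α β = (n : ℝ)
  act_refl : ∀ α ∈ roots, ∀ v : V, act (refl α) v = v - coroot α v • α
  simple_subset : simple ⊆ pos
  simple_finite : simple.Finite
  /-- Every positive root is a nonnegative integral combination of simple roots. -/
  pos_combination : ∀ β ∈ pos, ∃ c : V → ℕ,
    β = ∑ γ ∈ simple_finite.toFinset, (c γ : ℝ) • γ
  /-- The Weyl group is generated by the simple reflections. -/
  gen : ∀ w : W, ∃ l : List V, (∀ β ∈ l, β ∈ simple) ∧ w = (l.map refl).prod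
  /-- The length is the word length with respect to the simple reflections. -/
  len_eq : ∀ w : W, len w = sInf {n : ℕ | ∃ l : List V, l.length = n ∧
    (∀ β ∈ l, β ∈ simple) ∧ w = (l.map refl).prod}
  /-- The Bruhat order. -/
  bruhat : W → W → Prop
  /-- Subword characterization of the Bruhat order. -/
  bruhat_iff : ∀ w' w : W, bruhat w' w ↔ ∃ l : List V, l.length = len w ∧
    (∀ β ∈ l, β ∈ simple) ∧ w = (l.map refl).prod ∧
    ∃ l' : List V, l'.Sublist l ∧ w' = (l'.map refl).prod

namespace RootSystemData

variable {V : Type*} [AddCommGroup V] [Module ℝ V] {W : Type*} [Group W]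

/-- The inverted set `Ψ_w = Δ⁻ ∩ w(Δ⁺)`. -/
def invSet (R : RootSystemData V W) (w : W) : Set V :=
  (-R.pos) ∩ (⇑(R.act w) '' R.pos)

/-- The inversion set `Φ_w = Δ⁺ ∩ w⁻¹(Δ⁻)`. -/
def phiSet (R : RootSystemData V W) (w : W) : Set V :=
  R.pos ∩ (⇑(R.act w⁻¹) '' (-R.pos))

end RootSystemData

/-- let `ξ` be a nonzero dominant coweight, `Δ(𝔯_ξ) = {α ∈ Δ⁺ : ⟨α,ξ⟩ > 0}`
with cardinality `r_ξ`, and let `a_ξ`, `b_ξ` be the minimal and maximal positive values of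
`⟨α,ξ⟩` on roots. If the inversion set `Φ_{w⁻¹} = Δ⁺ ∩ w(Δ⁻)` is contained in `Δ(𝔯_ξ)` and
has cardinality `l`, then `a_ξ(r_ξ−l) − b_ξ l ≤ 2⟨wρ,ξ⟩ ≤ b_ξ(r_ξ−l) − a_ξ l`; hence
`l < a_ξ r_ξ/(a_ξ+b_ξ)` implies `⟨wρ,ξ⟩ > 0` and `l ≥ b_ξ r_ξ/(a_ξ+b_ξ)` implies
`⟨wρ,ξ⟩ ≤ 0`. -/
theorem pairing_wrho_bounds
    {V : Type*} [AddCommGroup V] [Module ℝ V] {W : Type*} [Group W]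
    (R : RootSystemData V W)
    (posF : Finset V) (hposF : (posF : Set V) = R.pos)
    (rho : V) (hrho : rho = (2⁻¹ : ℝ) • ∑ α ∈ posF, α)
    (ξ : Module.Dual ℝ V) (hξdom : ∀ α ∈ R.pos, 0 ≤ ξ α) (hξne : ξ ≠ 0)
    (r : ℕ) (hr : r = (posF.filter (fun α => 0 < ξ α)).card)
    (a b : ℝ)
    (ha₁ : ∀ α ∈ posF.filter (fun α => 0 < ξ α), a ≤ ξ α)
    (ha₂ : ∃ α ∈ posF.filter (fun α => 0 < ξ α), ξ α = a)
    (hb₁ : ∀ α ∈ posF.filter (fun α => 0 < ξ α), ξ α ≤ b)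
    (hb₂ : ∃ α ∈ posF.filter (fun α => 0 < ξ α), ξ α = b)
    (w : W)
    (hΦ : ∀ α ∈ posF.filter (fun α => α ∈ ⇑(R.act w) '' (-R.pos)), 0 < ξ α)
    (l : ℕ) (hl : l = (posF.filter (fun α => α ∈ ⇑(R.act w) '' (-R.pos))).card) :
    (a * ((r : ℝ) - l) - b * l ≤ 2 * ξ (R.act w rho) ∧
      2 * ξ (R.act w rho) ≤ b * ((r : ℝ) - l) - a * l) ∧
    ((l : ℝ) < a * r / (a + b) → 0 < ξ (R.act w rho)) ∧
    (b * r / (a + b) ≤ (l : ℝ) → ξ (R.act w rho) ≤ 0) := by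
    classical
  have hmem : ∀ x : V, x ∈ posF ↔ x ∈ R.pos := by
    intro x
    rw [← hposF]
    exact Finset.mem_coe.symm
  have hact : ∀ (u v : W) (x : V), R.act u (R.act v x) = R.act (u * v) x := by
    intro u v x
    rw [map_mul]
    rfl
  have hwinv : ∀ x : V, R.act w (R.act w⁻¹ x) = x := by
    intro x; rw [hact]; simp
  have hinvw : ∀ x : V, R.act w⁻¹ (R.act w x) = x := by
    intro x; rw [hact]; simp
  have hnotboth : ∀ x : V, x ∈ R.pos → -x ∈ R.pos → False := by
    intro x h1 h2
    exact Set.disjoint_left.mp R.pos_disjoint h1 (by simpa [Set.mem_neg] using h2)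
  have hpos_or : ∀ x ∈ R.roots, x ∈ R.pos ∨ -x ∈ R.pos := by
    intro x hx
    rw [R.roots_eq] at hx
    rcases hx with h | h
    · exact Or.inl h
    · exact Or.inr (by simpa [Set.mem_neg] using h)
  set Φ : Finset V := posF.filter (fun α => α ∈ ⇑(R.act w) '' (-R.pos)) with hΦdef
  set D : Finset V := posF.filter (fun α => 0 < ξ α) with hDdef
  -- key sum identity
  have key : ∑ α ∈ posF, ξ (R.act w α) = (∑ β ∈ posF \ Φ, ξ β) - ∑ β ∈ Φ, ξ β := by
    rw [← Finset.sum_filter_add_sum_filter_not posF (fun α => R.act w α ∈ R.pos)]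
    have h1 : ∑ α ∈ posF.filter (fun α => R.act w α ∈ R.pos), ξ (R.act w α)
        = ∑ β ∈ posF \ Φ, ξ β := by
      refine Finset.sum_nbij' (fun α => R.act w α) (fun β => R.act w⁻¹ β) ?_ ?_ ?_ ?_ ?_
      · intro α hα
        simp only [Finset.mem_filter] at hα
        rw [Finset.mem_sdiff, hΦdef, Finset.mem_filter]
        refine ⟨(hmem _).mpr hα.2, ?_⟩
        rintro ⟨-, ⟨γ, hγ, hγeq⟩⟩
        have : γ = α := (R.act w).injective hγeq
        subst this
        exact hnotboth γ ((hmem _).mp hα.1) (by simpa [Set.mem_neg] using hγ)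
      · intro β hβ
        rw [Finset.mem_sdiff, hΦdef, Finset.mem_filter] at hβ
        obtain ⟨hβpos, hβnot⟩ := hβ
        have hβpos' : β ∈ R.pos := (hmem _).mp hβpos
        have hroot : R.act w⁻¹ β ∈ R.roots := R.roots_invariant w⁻¹ β (R.pos_subset hβpos')
        have hP : R.act w⁻¹ β ∈ R.pos := by
          rcases hpos_or _ hroot with h | h
          · exact h
          · exfalso
            apply hβnot
            refine ⟨hβpos, ⟨R.act w⁻¹ β, ?_, hwinv β⟩⟩
            simpa [Set.mem_neg] using h
        rw [Finset.mem_filter]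
        exact ⟨(hmem _).mpr hP, by rw [hwinv]; exact hβpos'⟩
      · intro α hα; exact hinvw α
      · intro β hβ; exact hwinv β
      · intro α hα; rfl
    have h2 : ∑ α ∈ posF.filter (fun α => ¬ R.act w α ∈ R.pos), ξ (R.act w α)
        = - ∑ β ∈ Φ, ξ β := by
      rw [← Finset.sum_neg_distrib]
      refine Finset.sum_nbij' (fun α => -(R.act w α)) (fun β => -(R.act w⁻¹ β)) ?_ ?_ ?_ ?_ ?_
      · intro α hα
        simp only [Finset.mem_filter] at hα
        have hroot : R.act w α ∈ R.roots :=
          R.roots_invariant w α (R.pos_subset ((hmem _).mp hα.1))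
        have hneg : -(R.act w α) ∈ R.pos := by
          rcases hpos_or _ hroot with h | h
          · exact absurd h hα.2
          · exact h
        rw [hΦdef, Finset.mem_filter]
        refine ⟨(hmem _).mpr hneg, ⟨-α, ?_, by rw [map_neg]⟩⟩
        simpa [Set.mem_neg] using (hmem _).mp hα.1
      · intro β hβ
        rw [hΦdef, Finset.mem_filter] at hβ
        obtain ⟨hβpos, γ, hγ, hγeq⟩ := hβ
        have hβpos' : β ∈ R.pos := (hmem _).mp hβpos
        have hγ' : -γ ∈ R.pos := by simpa [Set.mem_neg] using hγ
        have hw : R.act w⁻¹ β = γ := by rw [← hγeq, hinvw]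
        rw [Finset.mem_filter]
        constructor
        · show -(R.act w⁻¹ β) ∈ posF
          rw [hw]; exact (hmem _).mpr hγ'
        · show R.act w (-(R.act w⁻¹ β)) ∉ R.pos
          rw [hw, map_neg, hγeq]
          intro hc
          exact hnotboth β hβpos' hc
      · intro α hα
        show -(R.act w⁻¹ (-(R.act w α))) = α
        rw [map_neg, neg_neg, hinvw]
      · intro β hβ
        show -(R.act w (-(R.act w⁻¹ β))) = β
        rw [map_neg, neg_neg, hwinv]
      · intro α hα
        show ξ (R.act w α) = -ξ (-(R.act w α))
        rw [map_neg, neg_neg]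
    rw [h1, h2]; ring
  -- express 2 ξ(wρ)
  have hpair : 2 * ξ (R.act w rho) = (∑ β ∈ posF \ Φ, ξ β) - ∑ β ∈ Φ, ξ β := by
    rw [← key, hrho, map_smul, map_smul, smul_eq_mul, map_sum, map_sum]
    ring
  -- Φ ⊆ D
  have hΦD : Φ ⊆ D := by
    intro α hα
    rw [hDdef, Finset.mem_filter]
    rw [hΦdef, Finset.mem_filter] at hα
    exact ⟨hα.1, hΦ α (by rw [hΦdef, Finset.mem_filter]; exact hα)⟩
  have hDposF : D ⊆ posF := Finset.filter_subset _ _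
  have hlr : l ≤ r := by rw [hl, hr]; exact Finset.card_le_card hΦD
  have hcard : (D \ Φ).card = r - l := by rw [Finset.card_sdiff_of_subset hΦD, hr, hl]
  -- replace posF \ Φ by D \ Φ
  have hsum_eq : ∑ β ∈ posF \ Φ, ξ β = ∑ β ∈ D \ Φ, ξ β := by
    refine (Finset.sum_subset (Finset.sdiff_subset_sdiff hDposF le_rfl) ?_).symm
    intro β hβ hβ'
    rw [Finset.mem_sdiff] at hβ hβ'
    by_contra hne
    have : 0 < ξ β := lt_of_le_of_ne (hξdom β ((hmem _).mp hβ.1)) (Ne.symm hne)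
    exact hβ' ⟨Finset.mem_filter.mpr ⟨hβ.1, this⟩, hβ.2⟩
  -- bounds for sums
  have hbound1a : (((r - l : ℕ) : ℝ)) * a ≤ ∑ β ∈ D \ Φ, ξ β := by
    rw [← hcard]
    have := Finset.card_nsmul_le_sum (D \ Φ) (fun β => ξ β) a
      (fun β hβ => ha₁ β (Finset.mem_sdiff.mp hβ).1)
    simpa [nsmul_eq_mul] using this
  have hbound1b : ∑ β ∈ D \ Φ, ξ β ≤ (((r - l : ℕ) : ℝ)) * b := by
    rw [← hcard]
    have := Finset.sum_le_card_nsmul (D \ Φ) (fun β => ξ β) b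
      (fun β hβ => hb₁ β (Finset.mem_sdiff.mp hβ).1)
    simpa [nsmul_eq_mul] using this
  have hbound2a : ((l : ℕ) : ℝ) * a ≤ ∑ β ∈ Φ, ξ β := by
    rw [hl]
    have := Finset.card_nsmul_le_sum Φ (fun β => ξ β) a (fun β hβ => ha₁ β (hΦD hβ))
    simpa [nsmul_eq_mul] using this
  have hbound2b : ∑ β ∈ Φ, ξ β ≤ ((l : ℕ) : ℝ) * b := by
    rw [hl]
    have := Finset.sum_le_card_nsmul Φ (fun β => ξ β) b (fun β hβ => hb₁ β (hΦD hβ))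
    simpa [nsmul_eq_mul] using this
  have hcast : ((r - l : ℕ) : ℝ) = (r : ℝ) - l := by
    rw [Nat.cast_sub hlr]
  rw [hcast] at hbound1a hbound1b
  rw [hsum_eq] at hpair
  -- positivity of a, b
  obtain ⟨αa, hαa, hαaeq⟩ := ha₂
  have hapos : 0 < a := hαaeq ▸ (Finset.mem_filter.mp hαa).2
  have hab : a ≤ b := hαaeq ▸ hb₁ αa hαa
  have habpos : 0 < a + b := by linarith
  refine ⟨⟨by linarith, by linarith⟩, ?_, ?_⟩
  · intro h
    have h' : (l : ℝ) * (a + b) < a * r := by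
      have := (lt_div_iff₀ habpos).mp h
      linarith
    nlinarith
  · intro h
    have h' : b * r ≤ (l : ℝ) * (a + b) := by
      have := (div_le_iff₀ habpos).mp h
      linarith
    nlinarith
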